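/- Under the stochastic subgradient oracle model with constants B, G > 0 and anchor x₀ ∈ X, assume f attains its minimum over X at x* ∈ X, and run the projected stochastic Halpern iteration with β_k = 1/(k+2) and τ_k = √(k+1)/(√6·B·(k+2)). Then for every K ≥ 1: (1/K)·Σ_{k=1}^{K} τ_k·E[f(x_k) − f(x*)] ≤ ((1 + Σ_{k=0}^{K} β_k)/K) · ((1/2)‖x₀ − x*‖² + G²/(6B²)). -/

import Mathlib

/-!
Fix an iterate `p`. Since `x*` lies in `X`, the projection does not increase the distance to `x*`,
and expanding the square with the unbiased oracle gives, for the next iterate `p⁺`,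
`E‖p⁺ - x*‖² + 2τ (f p - f x*) ≤ ‖p - x*‖² + β (‖x₀ - x*‖² + G² / (3B²))`.
The anchor contributes a cross term `2τβ ‖E g‖ ‖p - x₀‖`; Young's inequality with weight
`λ = (k + 3) / (k + 1)` absorbs it, together with the `(BG-0)` growth `B² ‖p - x₀‖²` of the second
moment, into the term `-β (1 - β) ‖p - x₀‖²` of the convex-combination identity for
`‖β x₀ + (1 - β) p - x*‖²`. Integrating over the first `k` samples (Fubini in the last coordinate)
and telescoping gives the bound.
-/

open MeasureTheory
open scoped RealInnerProductSpace

section NearestPoint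

variable {E : Type*} [NormedAddCommGroup E] [InnerProductSpace ℝ E] {X : Set E} {proj : E → E}

theorem real_inner_sub_nearest_le_zero (hXconv : Convex ℝ X) (hprojX : ∀ u, proj u ∈ X)
    (hproj : ∀ u, ∀ y ∈ X, ‖proj u - u‖ ≤ ‖y - u‖) (u : E) {z : E} (hz : z ∈ X) :
    ⟪u - proj u, z - proj u⟫ ≤ 0 := by
  have : Nonempty X := ⟨⟨z, hz⟩⟩
  refine (norm_eq_iInf_iff_real_inner_le_zero hXconv (hprojX u)).mp ?_ z hz
  refine le_antisymm (le_ciInf fun y => ?_) (ciInf_le ?_ (⟨proj u, hprojX u⟩ : X))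
  · simpa only [norm_sub_rev u] using hproj u y y.2
  · exact bddBelow_def.2 ⟨0, by rintro _ ⟨y, rfl⟩; exact norm_nonneg _⟩

theorem norm_nearest_sub_le (hXconv : Convex ℝ X) (hprojX : ∀ u, proj u ∈ X)
    (hproj : ∀ u, ∀ y ∈ X, ‖proj u - u‖ ≤ ‖y - u‖) (u : E) {z : E} (hz : z ∈ X) :
    ‖proj u - z‖ ≤ ‖u - z‖ := by
  have hvi := real_inner_sub_nearest_le_zero hXconv hprojX hproj u hz
  have hsplit : ‖u - z‖ ^ 2
      = ‖u - proj u‖ ^ 2 - 2 * ⟪u - proj u, z - proj u⟫ + ‖proj u - z‖ ^ 2 := by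
    rw [show u - z = (u - proj u) - (z - proj u) by abel, norm_sub_sq_real, norm_sub_rev z]
  exact (pow_le_pow_iff_left₀ (norm_nonneg _) (norm_nonneg _) two_ne_zero).mp
    (by nlinarith [sq_nonneg ‖u - proj u‖])

end NearestPoint

theorem norm_smul_add_one_sub_smul_sq {E : Type*} [NormedAddCommGroup E] [InnerProductSpace ℝ E]
    (b : ℝ) (u v : E) :
    ‖b • u + (1 - b) • v‖ ^ 2 = b * ‖u‖ ^ 2 + (1 - b) * ‖v‖ ^ 2 - b * (1 - b) * ‖u - v‖ ^ 2 := by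
  rw [norm_add_sq_real, norm_sub_sq_real, norm_smul, norm_smul, real_inner_smul_left,
    real_inner_smul_right, mul_pow, mul_pow, Real.norm_eq_abs, Real.norm_eq_abs, sq_abs, sq_abs]
  ring

theorem two_mul_le_mul_sq_add_sq_div {a c lam : ℝ} (hlam : 0 < lam) :
    2 * a * c ≤ lam * a ^ 2 + c ^ 2 / lam := by
  have : lam * a ^ 2 + c ^ 2 / lam - 2 * a * c = (lam * a - c) ^ 2 / lam := by
    field_simp; ring
  nlinarith [div_nonneg (sq_nonneg (lam * a - c)) hlam.le]

theorem sum_range_add_le_of_forall_add_le {a u c : ℕ → ℝ}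
    (h : ∀ k, a k + u (k + 1) ≤ u k + c k) (n : ℕ) :
    ∑ k ∈ Finset.range n, a k + u n ≤ u 0 + ∑ k ∈ Finset.range n, c k := by
  induction n with
  | zero => simp
  | succ n ih =>
    rw [Finset.sum_range_succ, Finset.sum_range_succ]
    linarith [h n]

theorem one_div_mul_sum_Icc_le {a : ℕ → ℝ} (ha : ∀ k, 0 ≤ a k) {K : ℕ} {D S c : ℝ}
    (hc : 0 ≤ c) (h : 2 * ∑ k ∈ Finset.range (K + 1), a k ≤ D + S * (D + 2 * c)) :
    1 / (K : ℝ) * ∑ k ∈ Finset.Icc 1 K, a k ≤ (1 + S) / K * (1 / 2 * D + c) := by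
  have hsub : ∑ k ∈ Finset.Icc 1 K, a k ≤ ∑ k ∈ Finset.range (K + 1), a k :=
    Finset.sum_le_sum_of_subset_of_nonneg (fun k hk => by simp at hk ⊢; omega)
      fun k _ _ => ha k
  calc _ ≤ 1 / (K : ℝ) * ((1 + S) * (1 / 2 * D + c)) := by gcongr; linarith
    _ = _ := by ring

section Moments

variable {Ω : Type*} [MeasurableSpace Ω] {μ : Measure Ω} [IsProbabilityMeasure μ]
  {E : Type*} [NormedAddCommGroup E] [InnerProductSpace ℝ E] [CompleteSpace E]

theorem sq_norm_integral_le_integral_norm_sq {F : Ω → E} (hF : MemLp F 2 μ) :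
    ‖∫ ω, F ω ∂μ‖ ^ 2 ≤ ∫ ω, ‖F ω‖ ^ 2 ∂μ :=
  (convexOn_univ_norm.pow (fun _ _ => norm_nonneg _) 2).map_integral_le
    (by fun_prop) isClosed_univ (ae_of_all _ fun _ => trivial) (hF.integrable one_le_two)
    hF.integrable_norm_pow'

theorem integral_norm_sub_smul_sq {F : Ω → E} (hF : MemLp F 2 μ) (y : E) (t : ℝ) :
    ∫ ω, ‖y - t • F ω‖ ^ 2 ∂μ
      = ‖y‖ ^ 2 - 2 * t * ⟪∫ ω, F ω ∂μ, y⟫ + t ^ 2 * ∫ ω, ‖F ω‖ ^ 2 ∂μ := by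
  have hF1 : Integrable F μ := hF.integrable one_le_two
  have hexp : ∀ ω, ‖y - t • F ω‖ ^ 2 = ‖y‖ ^ 2 - 2 * t * ⟪y, F ω⟫ + t ^ 2 * ‖F ω‖ ^ 2 := by
    intro ω
    rw [norm_sub_sq_real, real_inner_smul_right, norm_smul, mul_pow, Real.norm_eq_abs, sq_abs]
    ring
  have hlin : Integrable (fun ω => 2 * t * ⟪y, F ω⟫) μ := (hF1.const_inner y).const_mul _
  have hconst : Integrable (fun ω => ‖y‖ ^ 2 - 2 * t * ⟪y, F ω⟫) μ :=
    (integrable_const _).sub hlin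
  simp only [hexp]
  rw [integral_add hconst (hF.integrable_norm_pow'.const_mul _),
    integral_sub (integrable_const _) hlin, integral_const_mul, integral_const_mul,
    integral_const, probReal_univ, one_smul, integral_inner hF1, real_inner_comm]

theorem sub_le_of_mean_subgradient {f : E → ℝ} {g : E → Ω → E} {p q : E}
    (hsub : f p + ⟪∫ ω, g p ω ∂μ, q - p⟫ ≤ f q) (hgp : MemLp (g p) 2 μ) :
    f p - f q ≤ (∫ ω, ‖g p ω‖ ^ 2 ∂μ + ‖p - q‖ ^ 2) / 2 := by
  have hcs : -(‖∫ ω, g p ω ∂μ‖ * ‖p - q‖) ≤ ⟪∫ ω, g p ω ∂μ, q - p⟫ := by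
    rw [norm_sub_rev p]; exact neg_le_of_abs_le (abs_real_inner_le_norm _ _)
  nlinarith [two_mul_le_add_sq ‖∫ ω, g p ω ∂μ‖ ‖p - q‖, sq_norm_integral_le_integral_norm_sq hgp]

end Moments

section PiFinSnoc

variable {Ω : Type*} [MeasurableSpace Ω]

def MeasurableEquiv.piFinSnoc (k : ℕ) : (Fin k → Ω) × Ω ≃ᵐ (Fin (k + 1) → Ω) :=
  MeasurableEquiv.prodComm.trans (MeasurableEquiv.piFinSuccAbove (fun _ => Ω) (Fin.last k)).symm

@[simp]
theorem MeasurableEquiv.piFinSnoc_apply (k : ℕ) (q : (Fin k → Ω) × Ω) :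
    MeasurableEquiv.piFinSnoc k q = Fin.snoc q.1 q.2 := by
  simp [MeasurableEquiv.piFinSnoc, MeasurableEquiv.piFinSuccAbove, Fin.insertNthEquiv]
  exact ⟨rfl, rfl⟩

variable (μ : Measure Ω) [SigmaFinite μ]

theorem measurePreserving_piFinSnoc (k : ℕ) :
    MeasurePreserving (MeasurableEquiv.piFinSnoc k)
      ((Measure.pi fun _ : Fin k => μ).prod μ) (Measure.pi fun _ : Fin (k + 1) => μ) :=
  (measurePreserving_piFinSuccAbove (fun _ => μ) (Fin.last k)).symm.comp
    Measure.measurePreserving_swap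

variable {F : Type*} [NormedAddCommGroup F]

theorem integrable_pi_succ_iff {k : ℕ} {φ : (Fin (k + 1) → Ω) → F} :
    Integrable φ (Measure.pi fun _ => μ) ↔
      Integrable (fun q : (Fin k → Ω) × Ω => φ (Fin.snoc q.1 q.2))
        ((Measure.pi fun _ => μ).prod μ) := by
  rw [← (measurePreserving_piFinSnoc μ k).integrable_comp_emb
    (MeasurableEquiv.piFinSnoc k).measurableEmbedding]
  simp only [Function.comp_def, MeasurableEquiv.piFinSnoc_apply]

theorem integral_pi_succ [NormedSpace ℝ F] {k : ℕ} {φ : (Fin (k + 1) → Ω) → F}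
    (hφ : Integrable φ (Measure.pi fun _ => μ)) :
    ∫ w, φ w ∂(Measure.pi fun _ => μ)
      = ∫ v, ∫ a, φ (Fin.snoc v a) ∂μ ∂(Measure.pi fun _ => μ) := by
  rw [← (measurePreserving_piFinSnoc μ k).integral_comp', ← integral_prod _
    ((integrable_pi_succ_iff μ).mp hφ)]
  simp only [MeasurableEquiv.piFinSnoc_apply]

end PiFinSnoc

def halpernStep {E Ω : Type*} [AddCommGroup E] [Module ℝ E] (proj : E → E) (g : E → Ω → E)
    (x₀ : E) (β τ : ℝ) (p : E) (ω : Ω) : E :=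
  proj (β • x₀ + (1 - β) • p - τ • g p ω)

section HalpernStep

variable {Ω : Type*} {E : Type*} [NormedAddCommGroup E] [InnerProductSpace ℝ E]
  {X : Set E} {proj : E → E} {g : E → Ω → E} {x₀ : E}

theorem norm_halpernStep_sub_anchor_sq_le (hXconv : Convex ℝ X) (hprojX : ∀ u, proj u ∈ X)
    (hproj : ∀ u, ∀ y ∈ X, ‖proj u - u‖ ≤ ‖y - u‖) (hx₀ : x₀ ∈ X) (b t : ℝ) (p : E) (ω : Ω) :
    ‖halpernStep proj g x₀ b t p ω - x₀‖ ^ 2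
      ≤ 2 * ((1 - b) ^ 2 * ‖p - x₀‖ ^ 2 + t ^ 2 * ‖g p ω‖ ^ 2) := by
  have hnear := norm_nearest_sub_le hXconv hprojX hproj (b • x₀ + (1 - b) • p - t • g p ω) hx₀
  rw [show b • x₀ + (1 - b) • p - t • g p ω - x₀ = (1 - b) • (p - x₀) - t • g p ω by module]
    at hnear
  calc ‖halpernStep proj g x₀ b t p ω - x₀‖ ^ 2
      ≤ (‖(1 - b) • (p - x₀)‖ + ‖t • g p ω‖) ^ 2 :=
        pow_le_pow_left₀ (norm_nonneg _) (hnear.trans (norm_sub_le _ _)) 2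
    _ ≤ 2 * (‖(1 - b) • (p - x₀)‖ ^ 2 + ‖t • g p ω‖ ^ 2) := add_sq_le
    _ = _ := by simp only [norm_smul, mul_pow, Real.norm_eq_abs, sq_abs]

theorem halpernStep_iterate_mem (hprojX : ∀ u, proj u ∈ X) (hx₀ : x₀ ∈ X) {β τ : ℕ → ℝ}
    {x : (k : ℕ) → (Fin k → Ω) → E} (hx0 : ∀ w, x 0 w = x₀)
    (hsnoc : ∀ k v a, x (k + 1) (Fin.snoc v a) = halpernStep proj g x₀ (β k) (τ k) (x k v) a) :
    ∀ k w, x k w ∈ X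
  | 0, w => hx0 w ▸ hx₀
  | k + 1, w => by rw [← Fin.snoc_init_self w, hsnoc]; exact hprojX _

variable [MeasurableSpace Ω] {μ : Measure Ω} [IsProbabilityMeasure μ] [CompleteSpace E]

theorem integral_norm_halpernStep_sub_sq_add_le (hXconv : Convex ℝ X)
    (hprojX : ∀ u, proj u ∈ X) (hproj : ∀ u, ∀ y ∈ X, ‖proj u - u‖ ≤ ‖y - u‖)
    {f : E → ℝ} {xstar p : E} (hxstar : xstar ∈ X) {B G : ℝ}
    (hgp : MemLp (g p) 2 μ) (hsub : f p + ⟪∫ ω, g p ω ∂μ, xstar - p⟫ ≤ f xstar)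
    (hBG : ∫ ω, ‖g p ω‖ ^ 2 ∂μ ≤ B ^ 2 * ‖p - x₀‖ ^ 2 + G ^ 2)
    {b t lam : ℝ} (hb : 0 ≤ b) (ht : 0 ≤ t) (hlam : 0 < lam)
    (hGcoef : (lam + 1) * t ^ 2 ≤ b / (3 * B ^ 2))
    (hWcoef : (lam + 1) * t ^ 2 * B ^ 2 + b ^ 2 / lam ≤ b * (1 - b)) :
    ∫ ω, ‖halpernStep proj g x₀ b t p ω - xstar‖ ^ 2 ∂μ + 2 * t * (f p - f xstar)
      ≤ ‖p - xstar‖ ^ 2 + b * (‖x₀ - xstar‖ ^ 2 + G ^ 2 / (3 * B ^ 2)) := by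
  set y := b • x₀ + (1 - b) • p
  set gbar := ∫ ω, g p ω ∂μ
  set S := ∫ ω, ‖g p ω‖ ^ 2 ∂μ
  set W := ‖p - x₀‖
  have hproj_le : ∫ ω, ‖halpernStep proj g x₀ b t p ω - xstar‖ ^ 2 ∂μ
      ≤ ∫ ω, ‖(y - xstar) - t • g p ω‖ ^ 2 ∂μ := by
    refine integral_mono_of_nonneg (ae_of_all _ fun _ => sq_nonneg _)
      ((memLp_const _).sub (hgp.const_smul t)).integrable_norm_pow' (ae_of_all _ fun ω => ?_)
    show ‖proj (y - t • g p ω) - xstar‖ ^ 2 ≤ ‖y - xstar - t • g p ω‖ ^ 2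
    rw [sub_right_comm]
    exact pow_le_pow_left₀ (norm_nonneg _) (norm_nearest_sub_le hXconv hprojX hproj _ hxstar) 2
  have hexpand : ∫ ω, ‖(y - xstar) - t • g p ω‖ ^ 2 ∂μ
      = ‖y - xstar‖ ^ 2 - 2 * t * ⟪gbar, y - xstar⟫ + t ^ 2 * S :=
    integral_norm_sub_smul_sq hgp _ _
  have hcomb : ‖y - xstar‖ ^ 2
      = b * ‖x₀ - xstar‖ ^ 2 + (1 - b) * ‖p - xstar‖ ^ 2 - b * (1 - b) * W ^ 2 := by
    rw [show y - xstar = b • (x₀ - xstar) + (1 - b) • (p - xstar) by module,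
      norm_smul_add_one_sub_smul_sq, sub_sub_sub_cancel_right, norm_sub_rev x₀ p]
  have hinner : f p - f xstar - b * (‖gbar‖ * W) ≤ ⟪gbar, y - xstar⟫ := by
    have hcs : -(‖gbar‖ * W) ≤ ⟪gbar, x₀ - p⟫ := by
      have h := abs_real_inner_le_norm gbar (x₀ - p)
      rw [norm_sub_rev] at h
      exact neg_le_of_abs_le h
    rw [← neg_sub p xstar, inner_neg_right] at hsub
    rw [show y - xstar = (p - xstar) + b • (x₀ - p) by module, inner_add_right,
      real_inner_smul_right]
    linarith [mul_le_mul_of_nonneg_left hcs hb]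
  have hyoung : 2 * t * (b * (‖gbar‖ * W)) ≤ lam * t ^ 2 * ‖gbar‖ ^ 2 + b ^ 2 / lam * W ^ 2 := by
    calc 2 * t * (b * (‖gbar‖ * W)) = 2 * (t * ‖gbar‖) * (b * W) := by ring
      _ ≤ lam * (t * ‖gbar‖) ^ 2 + (b * W) ^ 2 / lam := two_mul_le_mul_sq_add_sq_div hlam
      _ = _ := by ring
  have hjensen : ‖gbar‖ ^ 2 ≤ S := sq_norm_integral_le_integral_norm_sq hgp
  have hGterm : b / (3 * B ^ 2) * G ^ 2 = b * (G ^ 2 / (3 * B ^ 2)) := by ring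
  linarith [mul_le_mul_of_nonneg_left hinner (by positivity : 0 ≤ 2 * t),
    mul_le_mul_of_nonneg_left hjensen (by positivity : 0 ≤ lam * t ^ 2),
    mul_le_mul_of_nonneg_left hBG (by positivity : 0 ≤ (lam + 1) * t ^ 2),
    mul_le_mul_of_nonneg_right hWcoef (sq_nonneg W),
    mul_le_mul_of_nonneg_right hGcoef (sq_nonneg G), mul_nonneg hb (sq_nonneg ‖p - xstar‖)]

end HalpernStep

section Integrability

variable {Ω : Type*} [MeasurableSpace Ω] {μ : Measure Ω} [IsProbabilityMeasure μ]
  {E : Type*} [NormedAddCommGroup E] {V : Type*} [MeasurableSpace V] {ν : Measure V}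
  [IsFiniteMeasure ν] {g : E → Ω → E} {x₀ : E} {B G : ℝ}

theorem integrable_norm_sub_sq_of_integrable_norm_sub_sq {y : V → E}
    (hy : AEStronglyMeasurable y ν) {a : E} (h : Integrable (fun v => ‖y v - a‖ ^ 2) ν) (c : E) :
    Integrable (fun v => ‖y v - c‖ ^ 2) ν := by
  have hL2 := (memLp_two_iff_integrable_sq_norm (hy.sub aestronglyMeasurable_const)).mpr h
  simpa only [Pi.sub_apply, sub_sub_sub_cancel_right] using
    (hL2.sub (memLp_const (c - a))).integrable_norm_pow'

theorem integrable_sub_of_mean_subgradient [InnerProductSpace ℝ E] [CompleteSpace E]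
    {f : E → ℝ} {xstar : E} {y : V → E} (hfy : AEStronglyMeasurable (fun v => f (y v)) ν)
    (hgL2 : ∀ x, MemLp (g x) 2 μ) (hunbiased : ∀ x y, f x + ⟪∫ ω, g x ω ∂μ, y - x⟫ ≤ f y)
    (hBG : ∀ x, ∫ ω, ‖g x ω‖ ^ 2 ∂μ ≤ B ^ 2 * ‖x - x₀‖ ^ 2 + G ^ 2)
    (hmin : ∀ v, f xstar ≤ f (y v))
    (hy₀ : Integrable (fun v => ‖y v - x₀‖ ^ 2) ν)
    (hystar : Integrable (fun v => ‖y v - xstar‖ ^ 2) ν) :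
    Integrable (fun v => f (y v) - f xstar) ν := by
  have hmaj : Integrable (fun v => (B ^ 2 * ‖y v - x₀‖ ^ 2 + G ^ 2 + ‖y v - xstar‖ ^ 2) / 2) ν :=
    (((hy₀.const_mul (B ^ 2)).add (integrable_const (G ^ 2))).add hystar).div_const 2
  refine hmaj.mono' (hfy.sub aestronglyMeasurable_const) (ae_of_all _ fun v => ?_)
  rw [Real.norm_of_nonneg (sub_nonneg.mpr (hmin v))]
  linarith [sub_le_of_mean_subgradient (hunbiased (y v) xstar) (hgL2 (y v)), hBG (y v)]

variable [MeasurableSpace E] [BorelSpace E]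

theorem integrable_prod_norm_oracle_sq (hgmeas : Measurable (Function.uncurry g))
    (hgL2 : ∀ x, MemLp (g x) 2 μ)
    (hBG : ∀ x, ∫ ω, ‖g x ω‖ ^ 2 ∂μ ≤ B ^ 2 * ‖x - x₀‖ ^ 2 + G ^ 2)
    {y : V → E} (hy : Measurable y) (hyint : Integrable (fun v => ‖y v - x₀‖ ^ 2) ν) :
    Integrable (fun q : V × Ω => ‖g (y q.1) q.2‖ ^ 2) (ν.prod μ) := by
  have hmeas : Measurable fun q : V × Ω => ‖g (y q.1) q.2‖ ^ 2 :=
    (hgmeas.comp ((hy.comp measurable_fst).prodMk measurable_snd)).norm.pow_const 2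
  refine (integrable_prod_iff hmeas.aestronglyMeasurable).mpr
    ⟨ae_of_all _ fun v => (hgL2 (y v)).integrable_norm_pow', ?_⟩
  refine Integrable.mono' ((hyint.const_mul (B ^ 2)).add (integrable_const (G ^ 2)))
    hmeas.norm.stronglyMeasurable.integral_prod_right'.aestronglyMeasurable
    (ae_of_all _ fun v => ?_)
  simp only [norm_pow, norm_norm]
  rw [Real.norm_of_nonneg (integral_nonneg fun _ => by positivity)]
  exact hBG (y v)

theorem integrable_norm_halpernStep_sub_anchor_sq [InnerProductSpace ℝ E] {X : Set E}
    {proj : E → E} (hXconv : Convex ℝ X) (hprojX : ∀ u, proj u ∈ X)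
    (hproj : ∀ u, ∀ y ∈ X, ‖proj u - u‖ ≤ ‖y - u‖) (hx₀ : x₀ ∈ X)
    (hgmeas : Measurable (Function.uncurry g)) (hgL2 : ∀ x, MemLp (g x) 2 μ)
    (hBG : ∀ x, ∫ ω, ‖g x ω‖ ^ 2 ∂μ ≤ B ^ 2 * ‖x - x₀‖ ^ 2 + G ^ 2) {b t : ℝ} {k : ℕ}
    {y : (Fin k → Ω) → E} (hy : Measurable y)
    (hyint : Integrable (fun v => ‖y v - x₀‖ ^ 2) (Measure.pi fun _ => μ))
    {z : (Fin (k + 1) → Ω) → E} (hz : Measurable z)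
    (hzy : ∀ v a, z (Fin.snoc v a) = halpernStep proj g x₀ b t (y v) a) :
    Integrable (fun w => ‖z w - x₀‖ ^ 2) (Measure.pi fun _ => μ) := by
  rw [integrable_pi_succ_iff]
  simp only [hzy]
  have hzmeas : Measurable fun q : (Fin k → Ω) × Ω => halpernStep proj g x₀ b t (y q.1) q.2 := by
    simpa only [Function.comp_def, MeasurableEquiv.piFinSnoc_apply, hzy] using
      hz.comp (MeasurableEquiv.piFinSnoc k).measurable
  refine Integrable.mono' (((hyint.comp_fst μ).const_mul ((1 - b) ^ 2)).add
      ((integrable_prod_norm_oracle_sq hgmeas hgL2 hBG hy hyint).const_mul (t ^ 2)) |>.const_mul 2)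
    ((hzmeas.sub_const x₀).norm.pow_const 2).aestronglyMeasurable (ae_of_all _ fun q => ?_)
  rw [Real.norm_of_nonneg (sq_nonneg _)]
  exact norm_halpernStep_sub_anchor_sq_le hXconv hprojX hproj hx₀ b t (y q.1) q.2

end Integrability

section Iterates

variable {Ω : Type*} [MeasurableSpace Ω] {μ : Measure Ω} [IsProbabilityMeasure μ]
  {E : Type*} [NormedAddCommGroup E] [InnerProductSpace ℝ E]
  [CompleteSpace E] {X : Set E} {proj : E → E} {f : E → ℝ} {g : E → Ω → E} {x₀ xstar : E}
  {B G : ℝ}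

theorem integral_norm_sub_sq_add_le_of_halpernStep (hXconv : Convex ℝ X)
    (hprojX : ∀ u, proj u ∈ X) (hproj : ∀ u, ∀ y ∈ X, ‖proj u - u‖ ≤ ‖y - u‖) (hxstar : xstar ∈ X)
    (hgL2 : ∀ x, MemLp (g x) 2 μ) (hunbiased : ∀ x y, f x + ⟪∫ ω, g x ω ∂μ, y - x⟫ ≤ f y)
    (hBG : ∀ x, ∫ ω, ‖g x ω‖ ^ 2 ∂μ ≤ B ^ 2 * ‖x - x₀‖ ^ 2 + G ^ 2)
    {b t lam : ℝ} (hb : 0 ≤ b) (ht : 0 ≤ t) (hlam : 0 < lam)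
    (hGcoef : (lam + 1) * t ^ 2 ≤ b / (3 * B ^ 2))
    (hWcoef : (lam + 1) * t ^ 2 * B ^ 2 + b ^ 2 / lam ≤ b * (1 - b)) {k : ℕ}
    {y : (Fin k → Ω) → E} {z : (Fin (k + 1) → Ω) → E}
    (hzy : ∀ v a, z (Fin.snoc v a) = halpernStep proj g x₀ b t (y v) a)
    (hy : Integrable (fun v => ‖y v - xstar‖ ^ 2) (Measure.pi fun _ => μ))
    (hz : Integrable (fun w => ‖z w - xstar‖ ^ 2) (Measure.pi fun _ => μ))
    (hfy : Integrable (fun v => f (y v) - f xstar) (Measure.pi fun _ => μ)) :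
    2 * t * ∫ v, (f (y v) - f xstar) ∂(Measure.pi fun _ => μ)
        + ∫ w, ‖z w - xstar‖ ^ 2 ∂(Measure.pi fun _ => μ)
      ≤ ∫ v, ‖y v - xstar‖ ^ 2 ∂(Measure.pi fun _ => μ)
        + b * (‖x₀ - xstar‖ ^ 2 + G ^ 2 / (3 * B ^ 2)) := by
  have hz' := ((integrable_pi_succ_iff μ).mp hz).integral_prod_left
  simp only [hzy] at hz'
  rw [add_comm, integral_pi_succ μ hz]
  simp only [hzy]
  rw [← integral_const_mul, ← integral_add hz' (hfy.const_mul _)]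
  calc _ ≤ ∫ v, (‖y v - xstar‖ ^ 2 + b * (‖x₀ - xstar‖ ^ 2 + G ^ 2 / (3 * B ^ 2)))
        ∂(Measure.pi fun _ => μ) :=
        integral_mono (hz'.add (hfy.const_mul _)) (hy.add (integrable_const _)) fun v =>
          integral_norm_halpernStep_sub_sq_add_le hXconv hprojX hproj hxstar (hgL2 _)
            (hunbiased _ _) (hBG _) hb ht hlam hGcoef hWcoef
    _ = _ := by rw [integral_add hy (integrable_const _), integral_const, probReal_univ, one_smul]

variable [MeasurableSpace E] [BorelSpace E] [SecondCountableTopology E]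

theorem two_mul_sum_integral_sub_le_of_halpernStep (hXconv : Convex ℝ X)
    (hprojX : ∀ u, proj u ∈ X) (hproj : ∀ u, ∀ y ∈ X, ‖proj u - u‖ ≤ ‖y - u‖) (hx₀ : x₀ ∈ X)
    (hxstar : xstar ∈ X) (hxstarmin : ∀ y ∈ X, f xstar ≤ f y) (hf : Measurable f)
    (hgmeas : Measurable (Function.uncurry g)) (hgL2 : ∀ x, MemLp (g x) 2 μ)
    (hunbiased : ∀ x y, f x + ⟪∫ ω, g x ω ∂μ, y - x⟫ ≤ f y)
    (hBG : ∀ x, ∫ ω, ‖g x ω‖ ^ 2 ∂μ ≤ B ^ 2 * ‖x - x₀‖ ^ 2 + G ^ 2)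
    {β τ lam : ℕ → ℝ} (hβ : ∀ k, 0 ≤ β k) (hτ : ∀ k, 0 ≤ τ k) (hlam : ∀ k, 0 < lam k)
    (hGcoef : ∀ k, (lam k + 1) * τ k ^ 2 ≤ β k / (3 * B ^ 2))
    (hWcoef : ∀ k, (lam k + 1) * τ k ^ 2 * B ^ 2 + β k ^ 2 / lam k ≤ β k * (1 - β k))
    {x : (k : ℕ) → (Fin k → Ω) → E} (hxmeas : ∀ k, Measurable (x k)) (hx0 : ∀ w, x 0 w = x₀)
    (hsnoc : ∀ k v a, x (k + 1) (Fin.snoc v a) = halpernStep proj g x₀ (β k) (τ k) (x k v) a)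
    (N : ℕ) :
    2 * ∑ k ∈ Finset.range N, τ k * ∫ w, (f (x k w) - f xstar) ∂(Measure.pi fun _ => μ)
      ≤ ‖x₀ - xstar‖ ^ 2
        + (∑ k ∈ Finset.range N, β k) * (‖x₀ - xstar‖ ^ 2 + G ^ 2 / (3 * B ^ 2)) := by
  have hmem := halpernStep_iterate_mem hprojX hx₀ hx0 hsnoc
  have hint₀ : ∀ k, Integrable (fun w => ‖x k w - x₀‖ ^ 2) (Measure.pi fun _ => μ) := by
    intro k
    induction k with
    | zero => simp [hx0]
    | succ k ih =>
      exact integrable_norm_halpernStep_sub_anchor_sq hXconv hprojX hproj hx₀ hgmeas hgL2 hBG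
        (hxmeas k) ih (hxmeas (k + 1)) (hsnoc k)
  have hintstar : ∀ k, Integrable (fun w => ‖x k w - xstar‖ ^ 2) (Measure.pi fun _ => μ) :=
    fun k => integrable_norm_sub_sq_of_integrable_norm_sub_sq (hxmeas k).aestronglyMeasurable
      (hint₀ k) xstar
  have hintf : ∀ k, Integrable (fun w => f (x k w) - f xstar) (Measure.pi fun _ => μ) :=
    fun k => integrable_sub_of_mean_subgradient (hf.comp (hxmeas k)).aestronglyMeasurable
      hgL2 hunbiased hBG (fun w => hxstarmin _ (hmem k w)) (hint₀ k) (hintstar k)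
  have htel := sum_range_add_le_of_forall_add_le
    (u := fun k => ∫ w, ‖x k w - xstar‖ ^ 2 ∂(Measure.pi fun _ => μ)) (fun k =>
      integral_norm_sub_sq_add_le_of_halpernStep hXconv hprojX hproj hxstar hgL2 hunbiased hBG
        (hβ k) (hτ k) (hlam k) (hGcoef k) (hWcoef k) (hsnoc k) (hintstar k) (hintstar (k + 1))
        (hintf k)) N
  simp only [hx0, integral_const, probReal_univ, one_smul, mul_assoc, ← Finset.sum_mul,
    ← Finset.mul_sum] at htel
  have hlast : 0 ≤ ∫ w, ‖x N w - xstar‖ ^ 2 ∂(Measure.pi fun _ => μ) :=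
    integral_nonneg fun _ => sq_nonneg _
  linarith

end Iterates

theorem halpern_schedule_coef_le {B b t : ℝ} (hB : B ≠ 0) (k : ℕ) (hb : b = 1 / ((k : ℝ) + 2))
    (ht : t = √((k : ℝ) + 1) / (√6 * B * ((k : ℝ) + 2))) :
    (((k : ℝ) + 3) / (k + 1) + 1) * t ^ 2 ≤ b / (3 * B ^ 2) ∧
      (((k : ℝ) + 3) / (k + 1) + 1) * t ^ 2 * B ^ 2 + b ^ 2 / (((k : ℝ) + 3) / (k + 1))
        ≤ b * (1 - b) := by
  have hk : (0 : ℝ) ≤ k := k.cast_nonneg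
  have ht2 : t ^ 2 = ((k : ℝ) + 1) / (6 * B ^ 2 * ((k : ℝ) + 2) ^ 2) := by
    rw [ht, div_pow, mul_pow, mul_pow, Real.sq_sqrt (by positivity), Real.sq_sqrt (by positivity)]
  subst hb
  rw [ht2]
  constructor
  · apply le_of_eq
    field_simp
    ring
  · rw [← sub_nonneg]
    have : 1 / ((k : ℝ) + 2) * (1 - 1 / ((k : ℝ) + 2))
        - ((((k : ℝ) + 3) / (k + 1) + 1) * (((k : ℝ) + 1) / (6 * B ^ 2 * ((k : ℝ) + 2) ^ 2)) * B ^ 2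
          + (1 / ((k : ℝ) + 2)) ^ 2 / (((k : ℝ) + 3) / (k + 1)))
        = 2 * k / (3 * ((k : ℝ) + 2) * ((k : ℝ) + 3)) := by
      field_simp
      ring
    rw [this]
    positivity

theorem halpern_sgd_weighted_sum_bound_general
    {d : ℕ} {Ω : Type*} [MeasurableSpace Ω] (μ : Measure Ω) [IsProbabilityMeasure μ]
    (X : Set (EuclideanSpace ℝ (Fin d)))
    (hXconv : Convex ℝ X)
    (f : EuclideanSpace ℝ (Fin d) → ℝ) (hfconv : ConvexOn ℝ Set.univ f)
    (proj : EuclideanSpace ℝ (Fin d) → EuclideanSpace ℝ (Fin d))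
    (hprojX : ∀ u, proj u ∈ X)
    (hproj : ∀ u, ∀ y ∈ X, ‖proj u - u‖ ≤ ‖y - u‖)
    (x₀ : EuclideanSpace ℝ (Fin d)) (hx₀ : x₀ ∈ X)
    (B G : ℝ) (hB : 0 < B)
    (g : EuclideanSpace ℝ (Fin d) → Ω → EuclideanSpace ℝ (Fin d))
    (hgmeas : Measurable (Function.uncurry g))
    (hgL2 : ∀ x, MemLp (g x) 2 μ)
    (hunbiased : ∀ x y, f x + ⟪∫ ω, g x ω ∂μ, y - x⟫ ≤ f y)
    (hBG : ∀ x, ∫ ω, ‖g x ω‖ ^ 2 ∂μ ≤ B ^ 2 * ‖x - x₀‖ ^ 2 + G ^ 2)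
    (xstar : EuclideanSpace ℝ (Fin d)) (hxstarX : xstar ∈ X)
    (hxstarmin : ∀ y ∈ X, f xstar ≤ f y)
    (β τ : ℕ → ℝ)
    (hβ : ∀ k, β k = 1 / ((k : ℝ) + 2))
    (hτ : ∀ k, τ k = Real.sqrt ((k : ℝ) + 1) / (Real.sqrt 6 * B * ((k : ℝ) + 2)))
    (x : (k : ℕ) → (Fin k → Ω) → EuclideanSpace ℝ (Fin d))
    (hxmeas : ∀ k, Measurable (x k))
    (hx0 : ∀ w, x 0 w = x₀)
    (hxrec : ∀ k (w : Fin (k + 1) → Ω),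
      x (k + 1) w = proj (β k • x₀ + (1 - β k) • x k (Fin.init w)
        - τ k • g (x k (Fin.init w)) (w (Fin.last k)))) :
    ∀ K : ℕ, 1 ≤ K →
      (1 / (K : ℝ)) * ∑ k ∈ Finset.Icc 1 K,
          τ k * ∫ w, (f (x k w) - f xstar) ∂(Measure.pi fun _ : Fin k => μ)
        ≤ ((1 + ∑ k ∈ Finset.range (K + 1), β k) / (K : ℝ)) *
            ((1 / 2) * ‖x₀ - xstar‖ ^ 2 + G ^ 2 / (6 * B ^ 2)) := by
  intro K _
  have hsnoc : ∀ k v a,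
      x (k + 1) (Fin.snoc v a) = halpernStep proj g x₀ (β k) (τ k) (x k v) a := by
    intro k v a
    simp only [hxrec, Fin.init_snoc, Fin.snoc_last, halpernStep]
  have hmem := halpernStep_iterate_mem hprojX hx₀ hx0 hsnoc
  have hτ0 : ∀ k, 0 ≤ τ k := fun k => hτ k ▸ by positivity
  have hsum := two_mul_sum_integral_sub_le_of_halpernStep hXconv hprojX hproj hx₀ hxstarX
    hxstarmin (continuousOn_univ.mp (hfconv.continuousOn isOpen_univ)).measurable hgmeas hgL2
    hunbiased hBG (fun k => hβ k ▸ by positivity) hτ0 (lam := fun k => ((k : ℝ) + 3) / (k + 1))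
    (fun k => by positivity) (fun k => (halpern_schedule_coef_le hB.ne' k (hβ k) (hτ k)).1)
    (fun k => (halpern_schedule_coef_le hB.ne' k (hβ k) (hτ k)).2) hxmeas hx0 hsnoc (K + 1)
  rw [show G ^ 2 / (3 * B ^ 2) = 2 * (G ^ 2 / (6 * B ^ 2)) by field_simp; ring] at hsum
  exact one_div_mul_sum_Icc_le (fun k => mul_nonneg (hτ0 k) (integral_nonneg fun w =>
    sub_nonneg.mpr (hxstarmin _ (hmem k w)))) (by positivity) hsum

/-- Weighted-sum suboptimality bound for the projected stochastic Halpern iteration under (BG-0). -/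
theorem halpern_sgd_weighted_sum_bound
    {d : ℕ} {Ω : Type*} [MeasurableSpace Ω] (μ : Measure Ω) [IsProbabilityMeasure μ]
    (X : Set (EuclideanSpace ℝ (Fin d))) (hXne : X.Nonempty) (hXcl : IsClosed X)
    (hXconv : Convex ℝ X)
    (f : EuclideanSpace ℝ (Fin d) → ℝ) (hfconv : ConvexOn ℝ Set.univ f)
    (proj : EuclideanSpace ℝ (Fin d) → EuclideanSpace ℝ (Fin d))
    (hprojX : ∀ u, proj u ∈ X)
    (hproj : ∀ u, ∀ y ∈ X, ‖proj u - u‖ ≤ ‖y - u‖)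
    (x₀ : EuclideanSpace ℝ (Fin d)) (hx₀ : x₀ ∈ X)
    (B G : ℝ) (hB : 0 < B) (hG : 0 < G)
    (g : EuclideanSpace ℝ (Fin d) → Ω → EuclideanSpace ℝ (Fin d))
    (hgmeas : Measurable (Function.uncurry g))
    (hgL2 : ∀ x, MemLp (g x) 2 μ)
    (hunbiased : ∀ x y, f x + ⟪∫ ω, g x ω ∂μ, y - x⟫ ≤ f y)
    (hBG : ∀ x, ∫ ω, ‖g x ω‖ ^ 2 ∂μ ≤ B ^ 2 * ‖x - x₀‖ ^ 2 + G ^ 2)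
    (xstar : EuclideanSpace ℝ (Fin d)) (hxstarX : xstar ∈ X)
    (hxstarmin : ∀ y ∈ X, f xstar ≤ f y)
    (β τ : ℕ → ℝ)
    (hβ : ∀ k, β k = 1 / ((k : ℝ) + 2))
    (hτ : ∀ k, τ k = Real.sqrt ((k : ℝ) + 1) / (Real.sqrt 6 * B * ((k : ℝ) + 2)))
    (x : (k : ℕ) → (Fin k → Ω) → EuclideanSpace ℝ (Fin d))
    (hxmeas : ∀ k, Measurable (x k))
    (hx0 : ∀ w, x 0 w = x₀)
    (hxrec : ∀ k (w : Fin (k + 1) → Ω),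
      x (k + 1) w = proj (β k • x₀ + (1 - β k) • x k (Fin.init w)
        - τ k • g (x k (Fin.init w)) (w (Fin.last k)))) :
    ∀ K : ℕ, 1 ≤ K →
      (1 / (K : ℝ)) * ∑ k ∈ Finset.Icc 1 K,
          τ k * ∫ w, (f (x k w) - f xstar) ∂(Measure.pi fun _ : Fin k => μ)
        ≤ ((1 + ∑ k ∈ Finset.range (K + 1), β k) / (K : ℝ)) *
            ((1 / 2) * ‖x₀ - xstar‖ ^ 2 + G ^ 2 / (6 * B ^ 2)) :=
  halpern_sgd_weighted_sum_bound_general μ X hXconv f hfconv proj hprojX hproj x₀ hx₀ B G hB g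
    hgmeas hgL2 hunbiased hBG xstar hxstarX hxstarmin β τ hβ hτ x hxmeas hx0 hxrec
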